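/- Let A, B ∈ M_n be complex positive semidefinite matrices with r = rank(B) ≥ 1, and let c be a real number with 0 < c ≤ μ_{n−r+1}(A)/κ_eff(B). Then the Hermitian matrix C = A − cI satisfies μ_{n−r+1}(C) ≥ −(κ_eff(B) − 1) λ_min(C), and consequently C ∘ B is positive semidefinite. -/

import Mathlib

open Matrix
open scoped Matrix ComplexOrder

/-- `mu m A` is the smallest of the eigenvalues of all `m × m` principal submatrices of `A`
(principal submatrices are obtained by selecting the same set of `m` row and column indices). -/
noncomputable def mu {n : ℕ} (m : ℕ) (A : Matrix (Fin n) (Fin n) ℂ) : ℝ :=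
  sInf {t : ℝ | ∃ f : Fin m → Fin n, Function.Injective f ∧
    ∃ h : (A.submatrix f f).IsHermitian, ∃ i : Fin m, t = h.eigenvalues i}

/-- The smallest eigenvalue of a Hermitian matrix. -/
noncomputable def lambdaMin {n : ℕ} {A : Matrix (Fin n) (Fin n) ℂ} (hA : A.IsHermitian) : ℝ :=
  ⨅ i, hA.eigenvalues i

/-- The largest eigenvalue of a Hermitian matrix. -/
noncomputable def lambdaMax {n : ℕ} {A : Matrix (Fin n) (Fin n) ℂ} (hA : A.IsHermitian) : ℝ :=
  ⨆ i, hA.eigenvalues i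

/-- The smallest positive eigenvalue of a Hermitian matrix. -/
noncomputable def lambdaMinPos {n : ℕ} {A : Matrix (Fin n) (Fin n) ℂ} (hA : A.IsHermitian) : ℝ :=
  sInf {t : ℝ | (∃ i, hA.eigenvalues i = t) ∧ 0 < t}

/-- The effective condition number of a positive semidefinite matrix: the ratio of its largest
and smallest positive eigenvalues. -/
noncomputable def kappaEff {n : ℕ} {B : Matrix (Fin n) (Fin n) ℂ} (hB : B.IsHermitian) : ℝ :=
  lambdaMax hB / lambdaMinPos hB

/-!
Diagonalize `B = Vᴴ diag(λ) V`. Then `x* (C ⊙ B) x = ∑ₖ λₖ zₖ* C zₖ` with `zₖ = x ∘ Vₖ`, and for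
`λₖ > 0` the choice of `c` gives `λₖ (zₖ* A zₖ - c ‖zₖ‖²) ≥ λ⁺ (zₖ* A zₖ - μ ‖zₖ‖²)`, where
`λ⁺ = λ_min⁺(B)` and `μ = μ_{n-r+1}(A)`. So it suffices that `∑_{λₖ ≠ 0} Vₖ* G Vₖ ≥ 0` for
`G = D_x* (A - μ I) D_x`, i.e. that `tr (G P) ≥ 0` for the projection `P` onto the range of `B`.
Since every principal submatrix of `A` of order `n - r + 1` has eigenvalues `≥ μ`, the quadratic
form of `G` is nonnegative on vectors with at most `n - r + 1` nonzero entries, and `P` is a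
positive combination of rank-one projections onto such vectors: for an orthonormal basis
`q₁, …, q_{n-r}` of `ker B`, the generalized cross products `w_φ` of `q₁, …, q_{n-r}` and a
coordinate vector in the columns selected by `φ` are supported on `range φ`, and by Cauchy–Binet
`∑_φ w_φ w_φ* = (n - r + 1)! P`.

The first claim follows from `μ_m(A - cI) ≥ μ_m(A) - c`, `λ_min(A - cI) ≥ -c` and `κ c ≤ μ_m(A)`.
-/

open Finset

theorem Matrix.IsHermitian.posSemidef_sub_smul_one_iff {𝕜 n : Type*} [RCLike 𝕜] [Fintype n]
    [DecidableEq n] {A : Matrix n n 𝕜} (hA : A.IsHermitian) (a : ℝ) :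
    (A - (a : 𝕜) • 1).PosSemidef ↔ ∀ i, a ≤ hA.eigenvalues i := by
  have hAa : (A - (a : 𝕜) • 1).IsHermitian := hA.sub (by simp [IsHermitian, conjTranspose_smul])
  rw [posSemidef_iff_isHermitian_and_spectrum_nonneg, and_iff_right hAa,
    ← Algebra.algebraMap_eq_smul_one, ← spectrum.sub_singleton_eq, hA.spectrum_eq_image_range]
  simp [Set.subset_def, sub_nonneg]

theorem Matrix.submatrix_sub_smul_one {R m n : Type*} [Ring R] [DecidableEq m] [DecidableEq n]
    (A : Matrix n n R) (a : R) {f : m → n} (hf : Function.Injective f) :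
    (A - a • 1).submatrix f f = A.submatrix f f - a • 1 := by
  ext i j
  simp [one_apply, hf.eq_iff]

theorem Matrix.star_dotProduct_sub_smul_one_mulVec {R n : Type*} [Fintype n] [DecidableEq n]
    [CommRing R] [StarRing R] (A : Matrix n n R) (a : R) (v : n → R) :
    star v ⬝ᵥ (A - a • 1) *ᵥ v = star v ⬝ᵥ A *ᵥ v - a * (star v ⬝ᵥ v) := by
  rw [sub_mulVec, smul_mulVec, one_mulVec, dotProduct_sub, dotProduct_smul, smul_eq_mul]

theorem Matrix.star_dotProduct_mulVec_eq_submatrix {R m n : Type*} [Fintype m] [Fintype n]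
    [CommRing R] [StarRing R] (M : Matrix n n R) {f : m → n} (hf : Function.Injective f)
    {v : n → R} (hv : ∀ s ∉ Set.range f, v s = 0) :
    star v ⬝ᵥ M *ᵥ v = star (v ∘ f) ⬝ᵥ M.submatrix f f *ᵥ (v ∘ f) := by
  have hMv (s : n) : (M *ᵥ v) s = ∑ j, M s (f j) * v (f j) :=
    (Fintype.sum_of_injective f hf _ _ (fun t ht => by simp [hv t ht]) fun _ => rfl).symm
  refine (Fintype.sum_of_injective f hf _ _ (fun s hs => by simp [hv s hs]) fun i => ?_).symm
  rw [hMv]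
  rfl

theorem Matrix.star_dotProduct_diagonal_mul_mul_diagonal_mulVec {R n : Type*} [Fintype n]
    [DecidableEq n] [CommRing R] [StarRing R] (M : Matrix n n R) (x v : n → R) :
    star v ⬝ᵥ (diagonal (star x) * M * diagonal x) *ᵥ v = star (x * v) ⬝ᵥ M *ᵥ (x * v) := by
  have hx : diagonal x *ᵥ v = x * v := funext (mulVec_diagonal x v)
  have hx' : star v ᵥ* diagonal (star x) = star (x * v) :=
    funext fun s => by simp [vecMul_diagonal, mul_comm]
  rw [← mulVec_mulVec, ← mulVec_mulVec, hx, dotProduct_mulVec, hx']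

theorem Matrix.sum_star_dotProduct_mulVec_rows {R κ n : Type*} [Fintype κ] [Fintype n]
    [DecidableEq n] [CommRing R] [StarRing R] {V : Matrix κ n R} (hV : Vᴴ * V = 1)
    (H : Matrix n n R) :
    ∑ k, star (V k) ⬝ᵥ H *ᵥ V k = trace H := by
  calc _ = ∑ s, ∑ t, H s t * (Vᴴ * V) s t := by
        simp only [dotProduct, mulVec, mul_apply, conjTranspose_apply, Pi.star_apply, mul_sum]
        rw [sum_comm]
        refine sum_congr rfl fun s _ => ?_
        rw [sum_comm]
        exact sum_congr rfl fun t _ => sum_congr rfl fun k _ => by ring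
    _ = trace H := by simp [hV, one_apply, trace]

theorem Matrix.star_dotProduct_hadamard_mulVec {R κ n : Type*} [Fintype κ] [DecidableEq κ]
    [Fintype n] [CommRing R] [StarRing R] (C : Matrix n n R) (V : Matrix κ n R) (d : κ → R)
    (x : n → R) :
    star x ⬝ᵥ (C ⊙ (Vᴴ * diagonal d * V)) *ᵥ x
      = ∑ k, d k * (star (x * V k) ⬝ᵥ C *ᵥ (x * V k)) := by
  have hentry (s t : n) : (Vᴴ * diagonal d * V) s t = ∑ k, star (V k s) * d k * V k t := by
    rw [mul_apply]
    simp only [mul_diagonal, conjTranspose_apply]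
  simp only [dotProduct, mulVec, hadamard_apply, hentry, Pi.star_apply, Pi.mul_apply, star_mul',
    mul_sum, sum_mul]
  refine (sum_congr rfl fun s _ => sum_comm).trans ?_
  rw [sum_comm]
  exact sum_congr rfl fun k _ => sum_congr rfl fun s _ => sum_congr rfl fun t _ => by ring

section CauchyBinet

variable {R m n : Type*} [Fintype m] [DecidableEq m] [Fintype n] [CommRing R]

theorem Matrix.det_mul_transpose_eq_sum (X Y : Matrix m n R) :
    det (X * Yᵀ) = ∑ φ : m → n, det (X.submatrix id φ) * ∏ i, Y i (φ i) := by
  simp only [det_apply', mul_apply, transpose_apply, prod_univ_sum, Fintype.piFinset_univ,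
    mul_sum, submatrix_apply, id, sum_mul, prod_mul_distrib]
  rw [sum_comm]
  simp only [mul_assoc]

theorem Matrix.sum_det_submatrix_mul_det_submatrix (X Y : Matrix m n R) :
    ∑ φ : m → n, det (X.submatrix id φ) * det (Y.submatrix id φ)
      = (Fintype.card m).factorial * det (X * Yᵀ) := by
  -- after reindexing `φ = ψ ∘ τ`, the two signs of `τ` cancel
  have hτ (τ : Equiv.Perm m) : ∑ φ : m → n,
      det (X.submatrix id φ) * (Equiv.Perm.sign τ * ∏ i, Y (τ i) (φ i)) = det (X * Yᵀ) := by
    rw [det_mul_transpose_eq_sum, ← (Equiv.arrowCongr τ.symm (Equiv.refl n)).sum_comp]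
    refine sum_congr rfl fun ψ _ => ?_
    have hsign : ((Equiv.Perm.sign τ : ℤ) : R) * (Equiv.Perm.sign τ : ℤ) = 1 := by
      rw [← Int.cast_mul, ← Units.val_mul, Int.units_mul_self, Units.val_one, Int.cast_one]
    have hX : X.submatrix id (ψ ∘ τ) = (X.submatrix id ψ).submatrix id τ := rfl
    change det (X.submatrix id (ψ ∘ τ)) * (_ * ∏ i, Y (τ i) (ψ (τ i))) = _
    rw [hX, det_permute', Equiv.prod_comp τ (fun j => Y j (ψ j))]
    linear_combination (det (X.submatrix id ψ) * ∏ j, Y j (ψ j)) * hsign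
  simp only [det_apply' (Y.submatrix id _), submatrix_apply, id, mul_sum]
  rw [sum_comm, sum_congr rfl fun τ _ => hτ τ, sum_const, card_univ, Fintype.card_perm,
    nsmul_eq_mul]

end CauchyBinet

section CrossVector

variable {R ι n : Type*} [CommRing R] [StarRing R] [DecidableEq ι] [DecidableEq n]

def borderedRows (Q : Matrix ι n R) (s : n) : Matrix (ι ⊕ Unit) n R :=
  fromRows Q (replicateRow Unit (Pi.single s 1))

/-- The generalized cross product of the rows of `Q` in the columns selected by `φ`. -/
def crossVec [Fintype ι] (Q : Matrix ι n R) (φ : ι ⊕ Unit → n) (s : n) : R :=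
  star (det ((borderedRows Q s).submatrix id φ))

theorem crossVec_eq_zero [Fintype ι] (Q : Matrix ι n R) {φ : ι ⊕ Unit → n} {s : n}
    (hs : s ∉ Set.range φ) : crossVec Q φ s = 0 := by
  rw [crossVec, det_eq_zero_of_row_eq_zero (Sum.inr ()), star_zero]
  intro j
  have hj : φ j ≠ s := fun h => hs ⟨j, h⟩
  simp [borderedRows, hj]

theorem card_crossVec_ne_zero_le [Fintype ι] [Fintype n] [DecidableEq R] (Q : Matrix ι n R)
    (φ : ι ⊕ Unit → n) :
    #{s | crossVec Q φ s ≠ 0} ≤ Fintype.card ι + 1 :=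
  calc #{s | crossVec Q φ s ≠ 0} ≤ #(univ.image φ) :=
        card_le_card fun s hs => by
          by_contra h
          exact (mem_filter.mp hs).2 (crossVec_eq_zero Q (by simpa using h))
    _ ≤ Fintype.card ι + 1 := by simpa using card_image_le (s := univ) (f := φ)

theorem map_star_borderedRows_mul_transpose [Fintype n] {Q : Matrix ι n R} (hQ : Q * Qᴴ = 1)
    (s t : n) :
    (borderedRows Q s).map star * (borderedRows Q t)ᵀ
      = fromBlocks 1 (of fun l _ => star (Q l t)) (of fun _ l => Q l s)
          (of fun _ _ => (1 : Matrix n n R) s t) := by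
  ext (a | a) (b | b)
  · simpa [borderedRows, mul_apply, one_apply, mul_comm, eq_comm] using congrFun₂ hQ b a
  · simp [borderedRows, mul_apply, Pi.single_apply]
  · simp [borderedRows, mul_apply, Pi.single_apply, apply_ite star]
  · simp [borderedRows, mul_apply, Pi.single_apply, one_apply, eq_comm, apply_ite star]

theorem sum_crossVec_mul_star [Fintype ι] [Fintype n] {Q : Matrix ι n R} (hQ : Q * Qᴴ = 1)
    (s t : n) :
    ∑ φ, crossVec Q φ t * star (crossVec Q φ s)
      = (Fintype.card ι + 1).factorial * (1 - Qᴴ * Q : Matrix n n R) s t := by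
  have hφ (φ : ι ⊕ Unit → n) : crossVec Q φ t * star (crossVec Q φ s)
      = det (((borderedRows Q t).map star).submatrix id φ) *
          det ((borderedRows Q s).submatrix id φ) := by
    rw [crossVec, crossVec, star_star, submatrix_map, ← starRingEnd_apply, RingHom.map_det]
    rfl
  rw [sum_congr rfl fun φ _ => hφ φ, sum_det_submatrix_mul_det_submatrix,
    map_star_borderedRows_mul_transpose hQ, det_fromBlocks_one₁₁, det_unique]
  simp [mul_apply, mul_comm, one_apply, eq_comm]

theorem sum_star_crossVec_dotProduct_mulVec [Fintype ι] [Fintype n] {Q : Matrix ι n R}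
    (hQ : Q * Qᴴ = 1) (H : Matrix n n R) :
    ∑ φ, star (crossVec Q φ) ⬝ᵥ H *ᵥ crossVec Q φ
      = (Fintype.card ι + 1).factorial * (trace H - ∑ l, star (Q l) ⬝ᵥ H *ᵥ Q l) := by
  calc _ = ∑ s, ∑ t, H s t * ∑ φ, crossVec Q φ t * star (crossVec Q φ s) := by
        simp only [dotProduct, mulVec, Pi.star_apply, mul_sum]
        rw [sum_comm]
        refine sum_congr rfl fun s _ => ?_
        rw [sum_comm]
        exact sum_congr rfl fun t _ => sum_congr rfl fun φ _ => by ring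
    _ = ∑ s, ∑ t, H s t * ((Fintype.card ι + 1).factorial * (1 - Qᴴ * Q : Matrix n n R) s t) := by
        simp only [sum_crossVec_mul_star hQ]
    _ = _ := by
        simp only [Matrix.sub_apply, one_apply, mul_apply, conjTranspose_apply, mul_sub, mul_sum,
          sum_sub_distrib, trace, dotProduct, mulVec]
        congr 1
        · simp [mul_ite, mul_comm]
        · refine (sum_congr rfl fun s _ => sum_comm).trans ?_
          rw [sum_comm]
          exact sum_congr rfl fun l _ => sum_congr rfl fun s _ => sum_congr rfl fun t _ => by
            simp only [Pi.star_apply]; ring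

end CrossVector

section Sparse

variable {n : Type*} [Fintype n] [DecidableEq n]

def IsSparsePosSemidef (m : ℕ) (H : Matrix n n ℂ) : Prop :=
  ∀ v : n → ℂ, #{s | v s ≠ 0} ≤ m → 0 ≤ (star v ⬝ᵥ H *ᵥ v).re

theorem IsSparsePosSemidef.diagonal_mul_mul_diagonal {m : ℕ} {H : Matrix n n ℂ}
    (hH : IsSparsePosSemidef m H) (x : n → ℂ) :
    IsSparsePosSemidef m (diagonal (star x) * H * diagonal x) := by
  intro v hv
  rw [star_dotProduct_diagonal_mul_mul_diagonal_mulVec]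
  exact hH _ ((card_le_card fun s => by simp_all [Pi.mul_apply]).trans hv)

theorem IsSparsePosSemidef.sum_re_dotProduct_le_re_trace {ι : Type*} [Fintype ι] [DecidableEq ι]
    {H : Matrix n n ℂ} (hH : IsSparsePosSemidef (Fintype.card ι + 1) H) {Q : Matrix ι n ℂ}
    (hQ : Q * Qᴴ = 1) :
    ∑ l, (star (Q l) ⬝ᵥ H *ᵥ Q l).re ≤ (trace H).re := by
  have hsum : 0 ≤ (∑ φ, star (crossVec Q φ) ⬝ᵥ H *ᵥ crossVec Q φ).re := by
    rw [Complex.re_sum]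
    exact sum_nonneg fun φ _ => hH _ (card_crossVec_ne_zero_le Q φ)
  rw [sum_star_crossVec_dotProduct_mulVec hQ, ← Complex.ofReal_natCast, Complex.re_ofReal_mul,
    Complex.sub_re, Complex.re_sum] at hsum
  linarith [(mul_nonneg_iff_of_pos_left (by positivity)).mp hsum]

theorem IsSparsePosSemidef.sum_re_dotProduct_rows_nonneg {V : Matrix n n ℂ}
    (hV : V ∈ unitaryGroup n ℂ) (p : n → Prop) [DecidablePred p] {H : Matrix n n ℂ}
    (hH : IsSparsePosSemidef (Fintype.card {k // ¬ p k} + 1) H) :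
    0 ≤ ∑ k : {k // p k}, (star (V k) ⬝ᵥ H *ᵥ V k).re := by
  let Q : Matrix {k // ¬ p k} n ℂ := V.submatrix Subtype.val id
  have hQ : Q * Qᴴ = 1 := by
    rw [conjTranspose_submatrix, ← submatrix_mul _ _ _ id _ Function.bijective_id,
      ← star_eq_conjTranspose, mem_unitaryGroup_iff.mp hV, submatrix_one _ Subtype.val_injective]
  have hle : ∑ l : {k // ¬ p k}, (star (V l) ⬝ᵥ H *ᵥ V l).re ≤ (trace H).re :=
    hH.sum_re_dotProduct_le_re_trace hQ
  have htr := congrArg Complex.re (sum_star_dotProduct_mulVec_rows (mem_unitaryGroup_iff'.mp hV) H)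
  rw [Complex.re_sum, ← Fintype.sum_subtype_add_sum_subtype p] at htr
  linarith

end Sparse

section Mu

variable {n m : ℕ} {A : Matrix (Fin n) (Fin n) ℂ}

theorem mu_le_eigenvalues {f : Fin m → Fin n} (hf : Function.Injective f)
    (hAf : (A.submatrix f f).IsHermitian) (i : Fin m) : mu m A ≤ hAf.eigenvalues i := by
  classical
  refine csInf_le ((Set.finite_range fun p : (Fin m → Fin n) × Fin m =>
    if h : (A.submatrix p.1 p.1).IsHermitian then h.eigenvalues p.2 else 0).subset ?_).bddBelow
      ⟨f, hf, hAf, i, rfl⟩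
  rintro t ⟨f, -, h, i, rfl⟩
  exact ⟨(f, i), dif_pos h⟩

theorem le_mu (hA : A.IsHermitian) (hm : 1 ≤ m) (hmn : m ≤ n) {a : ℝ}
    (h : ∀ f : Fin m → Fin n, Function.Injective f → (A.submatrix f f - (a : ℂ) • 1).PosSemidef) :
    a ≤ mu m A := by
  refine le_csInf ⟨_, Fin.castLE hmn, Fin.castLE_injective hmn, hA.submatrix _, ⟨0, hm⟩, rfl⟩ ?_
  rintro t ⟨f, hf, hAf, i, rfl⟩
  exact (hAf.posSemidef_sub_smul_one_iff a).mp (h f hf) i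

theorem posSemidef_submatrix_sub_mu (hA : A.IsHermitian) {f : Fin m → Fin n}
    (hf : Function.Injective f) : (A.submatrix f f - (mu m A : ℂ) • 1).PosSemidef :=
  ((hA.submatrix f).posSemidef_sub_smul_one_iff _).mpr (mu_le_eigenvalues hf _)

theorem mu_sub_le_mu_sub_smul_one (hA : A.IsHermitian) (hm : 1 ≤ m) (hmn : m ≤ n) (c : ℝ) :
    mu m A - c ≤ mu m (A - (c : ℂ) • 1) := by
  have hC : (A - (c : ℂ) • 1).IsHermitian :=
    hA.sub (by simp [Matrix.IsHermitian, conjTranspose_smul])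
  refine le_mu hC hm hmn fun f hf => ?_
  rw [submatrix_sub_smul_one _ _ hf, sub_sub, ← add_smul, Complex.ofReal_sub, add_sub_cancel]
  exact posSemidef_submatrix_sub_mu hA hf

theorem isSparsePosSemidef_sub_mu (hA : A.IsHermitian) (hmn : m ≤ n) :
    IsSparsePosSemidef m (A - (mu m A : ℂ) • 1) := by
  intro v hv
  obtain ⟨T, hT, hTm⟩ := exists_superset_card_eq hv (by simpa using hmn)
  let f := T.orderEmbOfFin hTm
  have hvf : ∀ s ∉ Set.range f, v s = 0 := fun s hs => by
    by_contra h
    exact hs (by simpa [f] using hT (by simpa using h))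
  rw [star_dotProduct_mulVec_eq_submatrix _ f.injective hvf, submatrix_sub_smul_one _ _ f.injective]
  exact (posSemidef_submatrix_sub_mu hA f.injective).re_dotProduct_nonneg _

end Mu

section Spectrum

variable {n : ℕ} {A : Matrix (Fin n) (Fin n) ℂ}

theorem le_lambdaMin [NeZero n] (hA : A.IsHermitian) {a : ℝ} (h : (A - (a : ℂ) • 1).PosSemidef) :
    a ≤ lambdaMin hA :=
  le_ciInf ((hA.posSemidef_sub_smul_one_iff a).mp h)

theorem eigenvalues_le_lambdaMax (hA : A.IsHermitian) (i : Fin n) :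
    hA.eigenvalues i ≤ lambdaMax hA :=
  le_ciSup (Set.finite_range _).bddAbove i

theorem lambdaMinPos_nonneg (hA : A.IsHermitian) : 0 ≤ lambdaMinPos hA :=
  Real.sInf_nonneg fun _ ht => ht.2.le

theorem lambdaMinPos_le (hA : A.IsHermitian) {i : Fin n} (hi : 0 < hA.eigenvalues i) :
    lambdaMinPos hA ≤ hA.eigenvalues i :=
  csInf_le ⟨0, fun _ ht => ht.2.le⟩ ⟨⟨i, rfl⟩, hi⟩

theorem lambdaMinPos_pos (hA : A.IsHermitian) {i : Fin n} (hi : 0 < hA.eigenvalues i) :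
    0 < lambdaMinPos hA := by
  have hmem : lambdaMinPos hA ∈ {t : ℝ | (∃ i, hA.eigenvalues i = t) ∧ 0 < t} :=
    Set.Nonempty.csInf_mem ⟨_, ⟨i, rfl⟩, hi⟩
      ((Set.finite_range hA.eigenvalues).subset fun _ ht => ht.1)
  exact hmem.2

theorem one_le_kappaEff (hA : A.IsHermitian) {i : Fin n} (hi : 0 < hA.eigenvalues i) :
    1 ≤ kappaEff hA :=
  (one_le_div (lambdaMinPos_pos hA hi)).mpr
    ((lambdaMinPos_le hA hi).trans (eigenvalues_le_lambdaMax hA i))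

theorem Matrix.PosSemidef.exists_eigenvalues_pos (hA : A.PosSemidef) (h : A.rank ≠ 0) :
    ∃ i, 0 < hA.1.eigenvalues i := by
  rw [hA.1.rank_eq_card_non_zero_eigs] at h
  obtain ⟨⟨i, hi⟩⟩ := Fintype.card_pos_iff.mp (Nat.pos_of_ne_zero h)
  exact ⟨i, (hA.eigenvalues_nonneg i).lt_of_ne' hi⟩

end Spectrum

theorem posSemidef_sub_smul_one_hadamard {n : ℕ} {A B : Matrix (Fin n) (Fin n) ℂ}
    (hA : A.PosSemidef) (hB : B.PosSemidef) (hB0 : B.rank ≠ 0) {c : ℝ} (hc : 0 ≤ c)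
    (h : c * lambdaMax hB.1 ≤ mu (n - B.rank + 1) A * lambdaMinPos hB.1) :
    ((A - (c : ℂ) • 1) ⊙ B).PosSemidef := by
  set μ := mu (n - B.rank + 1) A
  set ev := hB.1.eigenvalues
  set V : Matrix (Fin n) (Fin n) ℂ := star (hB.1.eigenvectorUnitary : Matrix (Fin n) (Fin n) ℂ)
  have hBV : Vᴴ * diagonal (fun k => (ev k : ℂ)) * V = B := by
    conv_rhs => rw [hB.1.spectral_theorem]
    simp only [V, star_eq_conjTranspose, conjTranspose_conjTranspose, Complex.coe_algebraMap,
      Unitary.conjStarAlgAut_apply]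
    rfl
  have hC : (A - (c : ℂ) • 1).IsHermitian :=
    hA.1.sub (by simp [Matrix.IsHermitian, conjTranspose_smul])
  refine .of_dotProduct_mulVec_nonneg (hC.hadamard hB.1) fun x => ?_
  refine Complex.nonneg_iff.mpr ⟨?_, ((hC.hadamard hB.1).im_star_dotProduct_mulVec_self x).symm⟩
  set G := diagonal (star x) * (A - (μ : ℂ) • 1) * diagonal x with hGdef
  have hcard : Fintype.card {k // ¬ ev k ≠ 0} = n - B.rank := by
    rw [Fintype.card_subtype_compl, hB.1.rank_eq_card_non_zero_eigs, Fintype.card_fin]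
  have hG : IsSparsePosSemidef (Fintype.card {k // ¬ ev k ≠ 0} + 1) G := by
    have := B.rank_le_width
    rw [hcard]
    exact (isSparsePosSemidef_sub_mu hA.1 (by omega)).diagonal_mul_mul_diagonal x
  have hterm (k : {k // ev k ≠ 0}) : lambdaMinPos hB.1 * (star (V k) ⬝ᵥ G *ᵥ V k).re
      ≤ ((ev k : ℂ) * (star (x * V k) ⬝ᵥ (A - (c : ℂ) • 1) *ᵥ (x * V k))).re := by
    have hlo := lambdaMinPos_le hB.1 ((hB.eigenvalues_nonneg k).lt_of_ne' k.2)
    have hhi := eigenvalues_le_lambdaMax hB.1 k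
    have ha := hA.re_dotProduct_nonneg (x * V k)
    have hw := (Complex.nonneg_iff.mp (dotProduct_star_self_nonneg (x * V k))).1
    rw [hGdef, star_dotProduct_diagonal_mul_mul_diagonal_mulVec,
      star_dotProduct_sub_smul_one_mulVec, star_dotProduct_sub_smul_one_mulVec]
    simp only [Complex.sub_re, Complex.re_ofReal_mul, RCLike.re_to_complex] at ha ⊢
    nlinarith [mul_le_mul_of_nonneg_right hlo ha, mul_le_mul_of_nonneg_right h hw,
      mul_le_mul_of_nonneg_right hhi (mul_nonneg hc hw)]
  calc 0 ≤ lambdaMinPos hB.1 * ∑ k : {k // ev k ≠ 0}, (star (V k) ⬝ᵥ G *ᵥ V k).re :=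
        mul_nonneg (lambdaMinPos_nonneg hB.1)
          (hG.sum_re_dotProduct_rows_nonneg (Unitary.star_mem hB.1.eigenvectorUnitary.2) _)
    _ ≤ ∑ k : {k // ev k ≠ 0},
          ((ev k : ℂ) * (star (x * V k) ⬝ᵥ (A - (c : ℂ) • 1) *ᵥ (x * V k))).re := by
        rw [mul_sum]
        exact sum_le_sum fun k _ => hterm k
    _ = (star x ⬝ᵥ ((A - (c : ℂ) • 1) ⊙ B) *ᵥ x).re := by
        rw [← hBV, star_dotProduct_hadamard_mulVec, Complex.re_sum,
          ← Fintype.sum_subtype_add_sum_subtype (fun k => ev k ≠ 0), left_eq_add]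
        exact sum_eq_zero fun k _ => by simp [not_not.mp k.2]

/-- **Remark.** For positive semidefinite `A, B` with `r = rank B ≥ 1` and
`0 < c ≤ μ_{n-r+1}(A)/κ_eff(B)`, the Hermitian matrix `C = A - c I` satisfies
`μ_{n-r+1}(C) ≥ -(κ_eff(B) - 1) λ_min(C)`, and consequently `C ⊙ B` is positive
semidefinite. -/
theorem stmt_11 {n : ℕ} (A B : Matrix (Fin n) (Fin n) ℂ)
    (hA : A.PosSemidef) (hB : B.PosSemidef) (r : ℕ) (hr : r = B.rank) (hr1 : 1 ≤ r)
    (c : ℝ) (hc0 : 0 < c) (hc1 : c ≤ mu (n - r + 1) A / kappaEff hB.1) :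
    ∀ hC : (A - (c : ℂ) • (1 : Matrix (Fin n) (Fin n) ℂ)).IsHermitian,
      mu (n - r + 1) (A - (c : ℂ) • (1 : Matrix (Fin n) (Fin n) ℂ)) ≥
        -(kappaEff hB.1 - 1) * lambdaMin hC ∧
      ((A - (c : ℂ) • (1 : Matrix (Fin n) (Fin n) ℂ)) ⊙ B).PosSemidef := by
  intro hC
  subst hr
  have hrn := B.rank_le_width
  obtain ⟨k, hk⟩ := hB.exists_eigenvalues_pos (by omega)
  have hκ := one_le_kappaEff hB.1 hk
  have hcκ : c * kappaEff hB.1 ≤ mu (n - B.rank + 1) A := (le_div_iff₀ (by linarith)).mp hc1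
  refine ⟨?_, posSemidef_sub_smul_one_hadamard hA hB (by omega) hc0.le ?_⟩
  · have : NeZero n := ⟨by omega⟩
    have hmu := mu_sub_le_mu_sub_smul_one hA.1 (by omega : 1 ≤ n - B.rank + 1) (by omega) c
    have hmin : -c ≤ lambdaMin hC := le_lambdaMin hC (by simpa using hA)
    nlinarith [mul_le_mul_of_nonneg_left hmin (sub_nonneg.mpr hκ)]
  · calc c * lambdaMax hB.1 = c * kappaEff hB.1 * lambdaMinPos hB.1 := by
          rw [kappaEff]; field_simp [(lambdaMinPos_pos hB.1 hk).ne']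
      _ ≤ _ := mul_le_mul_of_nonneg_right hcκ (lambdaMinPos_nonneg hB.1)
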